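/- arXiv:2112.08108 — 10 statements merged into one kernel-verified Lean document; each statement's English description precedes it below -/
import Mathlib

section
/- Let (Q, S, μ) be a fuzzy skill multimap such that μ(q) is a finite set for each q ∈ Q, and for each q ∈ Q let μ_M(q) denote the set of minimal elements of μ(q) with respect to ⊆. Then the delineated knowledge structure (Q, 𝒦) is a knowledge space if and only if the following holds: for every subset K ⊆ Q, K ∈ 𝒦 if and only if there exists a subfamily 𝒫_K ⊆ ⋃_{q∈Q} μ_M(q) with K = ⋃_{D∈𝒫_K} p(D). -/
/-- A fuzzy set on a set `S` of skills: a function `S → [0,1]`, ordered pointwise. -/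
abbrev FuzzySet (S : Type*) := S → unitInterval

/-- The problem function induced by a fuzzy skill multimap `μ`:
`p(F) = {q | ∃ C ∈ μ(q), C ⊆ F}`. -/
def pfun {Q S : Type*} (μ : Q → Set (FuzzySet S)) (F : FuzzySet S) : Set Q :=
  {q | ∃ C ∈ μ q, C ≤ F}

/-- The knowledge structure delineated by a fuzzy skill multimap `μ`. -/
def delineated {Q S : Type*} (μ : Q → Set (FuzzySet S)) : Set (Set Q) :=
  Set.range (pfun μ)

/-- `𝒦_q = {K ∈ 𝒦 | q ∈ K}`. -/
def Kq {Q : Type*} (𝒦 : Set (Set Q)) (q : Q) : Set (Set Q) := {K ∈ 𝒦 | q ∈ K}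

/-- A knowledge structure is discriminative if `𝒦_q ≠ 𝒦_r` for distinct `q, r`. -/
def Discriminative {Q : Type*} (𝒦 : Set (Set Q)) : Prop :=
  ∀ q r : Q, q ≠ r → Kq 𝒦 q ≠ Kq 𝒦 r

/-- A knowledge structure is bi-discriminative if `𝒦_q ⊄ 𝒦_r` and `𝒦_r ⊄ 𝒦_q`
for distinct `q, r`. -/
def BiDiscriminative {Q : Type*} (𝒦 : Set (Set Q)) : Prop :=
  ∀ q r : Q, q ≠ r → ¬ Kq 𝒦 q ⊆ Kq 𝒦 r ∧ ¬ Kq 𝒦 r ⊆ Kq 𝒦 q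

/-- `μ` is a fuzzy skill multimap: each `μ(q)` is a nonempty family of nonzero fuzzy sets. -/
def FSM {Q S : Type*} (μ : Q → Set (FuzzySet S)) : Prop :=
  ∀ q, (μ q).Nonempty ∧ ∀ C ∈ μ q, C ≠ 0

/-- A molecule: a fuzzy set with exactly one skill of nonzero membership. -/
def Molecule {S : Type*} (T : FuzzySet S) : Prop := ∃! s, T s ≠ 0

/-- A knowledge space: a knowledge structure closed under unions of arbitrary subfamilies. -/
def IsKSpace {Q : Type*} (𝒦 : Set (Set Q)) : Prop :=
  ∅ ∈ 𝒦 ∧ Set.univ ∈ 𝒦 ∧ ∀ 𝒮 ⊆ 𝒦, ⋃₀ 𝒮 ∈ 𝒦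


lemma exists_min_le {S : Type*} {M : Set (FuzzySet S)} (hfin : M.Finite)
    {C : FuzzySet S} (hC : C ∈ M) :
    ∃ D ∈ M, D ≤ C ∧ ∀ E ∈ M, E ≤ D → E = D := by
  obtain ⟨a, ⟨haM, haC⟩, hmin⟩ :=
    Set.Finite.exists_minimal (s := {D ∈ M | D ≤ C})
      (hfin.subset (Set.sep_subset _ _)) ⟨C, hC, le_refl C⟩
  exact ⟨a, haM, haC, fun E hE hEa => le_antisymm hEa (hmin ⟨hE, hEa.trans haC⟩ hEa)⟩

lemma empty_mem' {Q S : Type*} (μ : Q → Set (FuzzySet S)) (hFSM : FSM μ) :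
    (∅ : Set Q) ∈ delineated μ := by
  refine ⟨0, ?_⟩
  ext q
  simp only [pfun, Set.mem_setOf_eq, Set.mem_empty_iff_false, iff_false]
  rintro ⟨C, hC, hle⟩
  exact (hFSM q).2 C hC (le_antisymm hle (fun s => unitInterval.nonneg'))

lemma univ_mem' {Q S : Type*} (μ : Q → Set (FuzzySet S)) (hFSM : FSM μ) :
    (Set.univ : Set Q) ∈ delineated μ := by
  refine ⟨1, ?_⟩
  ext q
  simp only [pfun, Set.mem_setOf_eq, Set.mem_univ, iff_true]
  obtain ⟨C, hC⟩ := (hFSM q).1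
  exact ⟨C, hC, fun s => unitInterval.le_one'⟩

/-- For a fuzzy skill multimap with every `μ(q)` finite, the delineated
knowledge structure is a knowledge space iff membership in `𝒦` is characterized by
unions of `p(D)` over subfamilies of the minimal competencies `⋃_q μ_M(q)`. -/
theorem stmt_3 {Q S : Type*} [Nonempty Q] [Nonempty S]
    (μ : Q → Set (FuzzySet S)) (hFSM : FSM μ) (hfin : ∀ q, (μ q).Finite) :
    IsKSpace (delineated μ) ↔
      ∀ K : Set Q, K ∈ delineated μ ↔
        ∃ P ⊆ ⋃ q, {C ∈ μ q | ∀ D ∈ μ q, D ≤ C → D = C},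
          K = ⋃ D ∈ P, pfun μ D := by
  constructor
  · rintro ⟨-, -, hUnion⟩ K
    constructor
    · rintro ⟨F, rfl⟩
      refine ⟨{C | (∃ q, C ∈ μ q ∧ ∀ E ∈ μ q, E ≤ C → E = C) ∧ C ≤ F}, ?_, ?_⟩
      · rintro C ⟨⟨q, hCq, hmin⟩, -⟩
        exact Set.mem_iUnion.2 ⟨q, hCq, hmin⟩
      · ext q
        simp only [Set.mem_iUnion, pfun, Set.mem_setOf_eq]
        constructor
        · rintro ⟨C, hC, hle⟩
          obtain ⟨D, hD, hDC, hDmin⟩ := exists_min_le (hfin q) hC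
          exact ⟨D, ⟨⟨q, hD, hDmin⟩, hDC.trans hle⟩, D, hD, le_refl D⟩
        · rintro ⟨D, ⟨-, hDF⟩, C, hC, hCD⟩
          exact ⟨C, hC, hCD.trans hDF⟩
    · rintro ⟨P, hP, rfl⟩
      have : ⋃ D ∈ P, pfun μ D = ⋃₀ ((pfun μ) '' P) := by
        rw [Set.sUnion_image]
      rw [this]
      exact hUnion _ (by rintro K ⟨D, -, rfl⟩; exact ⟨D, rfl⟩)
  · intro hchar
    refine ⟨empty_mem' μ hFSM, univ_mem' μ hFSM, ?_⟩
    intro 𝒮 h𝒮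
    choose P hPsub hPeq using fun K (hK : K ∈ 𝒮) => (hchar K).1 (h𝒮 hK)
    refine (hchar _).2 ⟨⋃ K : 𝒮, P K K.2, ?_, ?_⟩
    · exact Set.iUnion_subset fun K => hPsub K K.2
    · ext q
      simp only [Set.mem_sUnion, Set.mem_iUnion]
      constructor
      · rintro ⟨K, hK, hq⟩
        rw [hPeq K hK] at hq
        simp only [Set.mem_iUnion] at hq
        obtain ⟨D, hD, hqD⟩ := hq
        exact ⟨D, ⟨⟨K, hK⟩, hD⟩, hqD⟩
      · rintro ⟨D, ⟨⟨K, hK⟩, hD⟩, hqD⟩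
        refine ⟨K, hK, ?_⟩
        rw [hPeq K hK]
        exact Set.mem_iUnion.2 ⟨D, Set.mem_iUnion.2 ⟨hD, hqD⟩⟩
end

section
/- Let (Q, S, μ) be a fuzzy skill multimap such that μ(q) is a finite set for each q ∈ Q. If for each q ∈ Q and any C₁, C₂ ∈ μ(q) there exists C₃ ∈ μ(q) with C₃ ⊆ C₁ ∩ C₂ (pointwise minimum), then the delineated knowledge structure (Q, 𝒦) is a simple closure space. -/
/-- A simple closure space: a knowledge structure closed under intersections of
nonempty subfamilies. -/
def IsSCSpace {Q : Type*} (𝒦 : Set (Set Q)) : Prop :=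
  ∅ ∈ 𝒦 ∧ Set.univ ∈ 𝒦 ∧ ∀ 𝒮 ⊆ 𝒦, 𝒮.Nonempty → ⋂₀ 𝒮 ∈ 𝒦

lemma exists_lb {Q S : Type*} (μ : Q → Set (FuzzySet S)) (hFSM : FSM μ)
    (hinter : ∀ q, ∀ C₁ ∈ μ q, ∀ C₂ ∈ μ q, ∃ C₃ ∈ μ q, C₃ ≤ C₁ ⊓ C₂)
    (q : Q) (t : Set (FuzzySet S)) (ht : t.Finite) (hsub : t ⊆ μ q) :
    ∃ C ∈ μ q, ∀ D ∈ t, C ≤ D := by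
  revert hsub
  refine Set.Finite.induction_on (motive := fun t _ => t ⊆ μ q → ∃ C ∈ μ q, ∀ D ∈ t, C ≤ D)
    t ht ?_ ?_
  · intro _
    obtain ⟨C, hC⟩ := (hFSM q).1
    exact ⟨C, hC, fun D hD => absurd hD (Set.notMem_empty D)⟩
  · intro a s ha hs ih hsub
    obtain ⟨C, hC, hCle⟩ := ih (fun x hx => hsub (Set.mem_insert_of_mem a hx))
    obtain ⟨C₃, hC₃, hle⟩ := hinter q C hC a (hsub (Set.mem_insert a s))
    refine ⟨C₃, hC₃, fun D hD => ?_⟩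
    rcases hD with rfl | hD
    · exact hle.trans inf_le_right
    · exact (hle.trans inf_le_left).trans (hCle D hD)

/-- If each `μ(q)` is finite and for all `C₁, C₂ ∈ μ(q)` there is
`C₃ ∈ μ(q)` with `C₃ ⊆ C₁ ∩ C₂` (pointwise minimum), then the delineated knowledge
structure is a simple closure space. -/
theorem stmt_5 {Q S : Type*} [Nonempty Q] [Nonempty S]
    (μ : Q → Set (FuzzySet S)) (hFSM : FSM μ) (hfin : ∀ q, (μ q).Finite)
    (hinter : ∀ q, ∀ C₁ ∈ μ q, ∀ C₂ ∈ μ q, ∃ C₃ ∈ μ q, C₃ ≤ C₁ ⊓ C₂) :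
    IsSCSpace (delineated μ) := by
  refine ⟨?_, ?_, ?_⟩
  · -- empty
    refine ⟨0, ?_⟩
    ext q
    simp only [pfun, Set.mem_setOf_eq, Set.mem_empty_iff_false, iff_false]
    rintro ⟨C, hC, hle⟩
    exact (hFSM q).2 C hC (funext fun s => le_antisymm (hle s) (C s).2.1)
  · -- univ
    refine ⟨fun _ => 1, ?_⟩
    ext q
    simp only [pfun, Set.mem_setOf_eq, Set.mem_univ, iff_true]
    obtain ⟨C, hC⟩ := (hFSM q).1
    exact ⟨C, hC, fun s => (C s).2.2⟩
  · -- intersections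
    rintro 𝒮 h𝒮 ⟨K₀, hK₀⟩
    choose G hG using fun (K : 𝒮) => h𝒮 K.2
    haveI : Nonempty 𝒮 := ⟨⟨K₀, hK₀⟩⟩
    have hbdd : ∀ s : S, BddBelow (Set.range fun K : 𝒮 => (G K s : ℝ)) :=
      fun s => ⟨0, by rintro x ⟨K, rfl⟩; exact (G K s).2.1⟩
    refine ⟨fun s => ⟨⨅ K : 𝒮, (G K s : ℝ), ?_, ?_⟩, ?_⟩
    · exact le_ciInf fun K => (G K s).2.1
    · exact (ciInf_le (hbdd s) (Classical.arbitrary 𝒮)).trans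
        (G (Classical.arbitrary 𝒮) s).2.2
    · ext q
      simp only [pfun, Set.mem_setOf_eq, Set.mem_sInter]
      constructor
      · rintro ⟨C, hC, hle⟩ K hK
        have h1 : q ∈ pfun μ (G ⟨K, hK⟩) := by
          refine ⟨C, hC, fun s => ?_⟩
          have h2 : (C s : ℝ) ≤ ⨅ K : 𝒮, (G K s : ℝ) := hle s
          exact h2.trans (ciInf_le (hbdd s) ⟨K, hK⟩)
        rw [hG ⟨K, hK⟩] at h1
        exact h1
      · intro hq
        have hCK : ∀ K : 𝒮, ∃ C ∈ μ q, C ≤ G K := by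
          intro K
          have h1 : q ∈ pfun μ (G K) := by rw [hG K]; exact hq K.1 K.2
          exact h1
        choose CK hCKmem hCKle using hCK
        obtain ⟨C, hC, hClb⟩ := exists_lb μ hFSM hinter q (Set.range CK)
          ((hfin q).subset (by rintro x ⟨K, rfl⟩; exact hCKmem K))
          (by rintro x ⟨K, rfl⟩; exact hCKmem K)
        refine ⟨C, hC, fun s => ?_⟩
        show (C s : ℝ) ≤ ⨅ K : 𝒮, (G K s : ℝ)
        exact le_ciInf fun K =>
          le_trans (hClb (CK K) ⟨K, rfl⟩ s) (hCKle K s)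
end

section
/- Let (Q, S, μ) be a fuzzy skill multimap such that each μ(q) is finite, and let 𝒟 denote the set of all molecules that belong to ⋃_{q∈Q} μ(q); for 𝒟' ⊆ 𝒟 write [𝒟'] = ⋃_{F∈𝒟'} p(F). Suppose that: (1) Q is finite; (2) for each q ∈ Q and each C ∈ μ(q) there exists a molecule T with T ⊆ C and T ∈ μ(q); (3) for each T ∈ 𝒟 with |p(T)| ≥ 2 there exists 𝒟' ⊆ 𝒟 such that [𝒟'] ⊆ p(T) and |p(T) \ [𝒟']| = 1. Then the delineated knowledge structure (Q, 𝒦) is a learning space. -/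
/-- The distance `d(K, L) = |K △ L|` between two sets (cardinality of symmetric
difference, as a natural number). -/
noncomputable def sdist {Q : Type*} (K L : Set Q) : ℕ := (symmDiff K L).ncard

/-- A family of sets is well-graded if any two distinct members are joined by a
stepwise path of length `d(K, L)` inside the family. -/
def WellGraded {Q : Type*} (𝒦 : Set (Set Q)) : Prop :=
  ∀ K ∈ 𝒦, ∀ L ∈ 𝒦, K ≠ L →
    ∃ f : ℕ → Set Q, f 0 = K ∧ f (sdist K L) = L ∧
      (∀ i ≤ sdist K L, f i ∈ 𝒦) ∧
      ∀ i, 1 ≤ i → i ≤ sdist K L → sdist (f (i - 1)) (f i) = 1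

/-- A learning space: a well-graded knowledge space. -/
def IsLearningSpace {Q : Type*} (𝒦 : Set (Set Q)) : Prop :=
  IsKSpace 𝒦 ∧ WellGraded 𝒦


section StmtSixAux

variable {Q S : Type*}

/-- The set of molecules occurring among the competencies. -/
def Dset (μ : Q → Set (FuzzySet S)) : Set (FuzzySet S) :=
  {T : FuzzySet S | Molecule T ∧ ∃ q, T ∈ μ q}

lemma pfun_mono (μ : Q → Set (FuzzySet S)) {F G : FuzzySet S} (h : F ≤ G) :
    pfun μ F ⊆ pfun μ G := by
  rintro q ⟨C, hC, hCF⟩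
  exact ⟨C, hC, hCF.trans h⟩

lemma pfun_zero {μ : Q → Set (FuzzySet S)} (hFSM : FSM μ) : pfun μ 0 = ∅ := by
  ext q
  simp only [pfun, Set.mem_setOf_eq, Set.mem_empty_iff_false, iff_false, not_exists]
  rintro C ⟨hC, hC0⟩
  refine (hFSM q).2 C hC ?_
  funext s
  exact le_antisymm (hC0 s) unitInterval.nonneg'

lemma mem_cover {μ : Q → Set (FuzzySet S)}
    (hmol : ∀ q, ∀ C ∈ μ q, ∃ T : FuzzySet S, Molecule T ∧ T ≤ C ∧ T ∈ μ q)
    {K : Set Q} (hK : K ∈ delineated μ) {q : Q} (hq : q ∈ K) :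
    ∃ T ∈ Dset μ, q ∈ pfun μ T ∧ pfun μ T ⊆ K := by
  obtain ⟨F, rfl⟩ := hK
  obtain ⟨C, hC, hCF⟩ := hq
  obtain ⟨T, hTm, hTC, hTq⟩ := hmol q C hC
  exact ⟨T, ⟨hTm, q, hTq⟩, ⟨T, hTq, le_rfl⟩, pfun_mono μ (hTC.trans hCF)⟩

lemma molecule_le {T T' : FuzzySet S} {s₀ : S}
    (hs₀ : ∀ s, T s ≠ 0 → s = s₀) (h : T s₀ ≤ T' s₀) : T ≤ T' := by
  intro s
  by_cases hs : T s = 0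
  · rw [hs]; exact unitInterval.nonneg'
  · have := hs₀ s hs; subst this; exact h

lemma sdist_insert {K : Set Q} {x : Q} (hx : x ∉ K) : sdist K (K ∪ {x}) = 1 := by
  have h : symmDiff K (K ∪ {x}) = {x} := by
    rw [Set.symmDiff_def]
    ext z
    simp only [Set.mem_union, Set.mem_diff, Set.mem_singleton_iff]
    constructor
    · rintro (⟨hz, h2⟩ | ⟨hz1 | hz1, hz2⟩)
      · exact absurd (Or.inl hz) h2
      · exact absurd hz1 hz2
      · exact hz1
    · rintro rfl
      exact Or.inr ⟨Or.inr rfl, hx⟩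
  rw [sdist, h, Set.ncard_singleton]

lemma sdist_comm (K L : Set Q) : sdist K L = sdist L K := by
  rw [sdist, sdist, symmDiff_comm]

variable {μ : Q → Set (FuzzySet S)} [Finite Q]
variable (hFSM : FSM μ) (hfin : ∀ q, (μ q).Finite)
    (hmol : ∀ q, ∀ C ∈ μ q, ∃ T : FuzzySet S, Molecule T ∧ T ≤ C ∧ T ∈ μ q)

include hFSM hfin hmol

set_option linter.unusedSectionVars false

lemma union_atoms_mem {D : Set (FuzzySet S)} (hD : D ⊆ Dset μ) :
    (⋃ T ∈ D, pfun μ T) ∈ delineated μ := by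
  have hDsetfin : (Dset μ).Finite := by
    have hsub : Dset μ ⊆ ⋃ q ∈ (Set.univ : Set Q), μ q := by
      rintro T ⟨-, q, hq⟩
      exact Set.mem_biUnion (Set.mem_univ q) hq
    exact (Set.Finite.biUnion Set.finite_univ (fun q _ => hfin q)).subset hsub
  have hDfin : D.Finite := hDsetfin.subset hD
  rcases D.eq_empty_or_nonempty with rfl | hne
  · refine ⟨0, ?_⟩
    rw [pfun_zero hFSM]
    simp
  · have hne' : hDfin.toFinset.Nonempty := by
      rwa [Set.Finite.toFinset_nonempty]
    refine ⟨fun s => hDfin.toFinset.sup' hne' (fun T => T s), ?_⟩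
    ext q
    constructor
    · rintro ⟨C, hC, hCF⟩
      obtain ⟨T, hTm, hTC, hTq⟩ := hmol q C hC
      obtain ⟨s₀, hs₀ne, hs₀u⟩ := hTm
      obtain ⟨T', hT'mem, hsupeq⟩ := Finset.exists_mem_eq_sup' hne' (fun T => T s₀)
      have h1 : T s₀ ≤ hDfin.toFinset.sup' hne' (fun T => T s₀) := (hTC.trans hCF) s₀
      rw [hsupeq] at h1
      have hTT' : T ≤ T' := molecule_le hs₀u h1
      exact Set.mem_biUnion (hDfin.mem_toFinset.mp hT'mem) ⟨T, hTq, hTT'⟩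
    · intro hq
      simp only [Set.mem_iUnion] at hq
      obtain ⟨T, hTD, hq⟩ := hq
      refine pfun_mono μ (fun s => ?_) hq
      exact Finset.le_sup' (fun T => T s) (hDfin.mem_toFinset.mpr hTD)

lemma covered_mem {W : Set Q}
    (h : ∀ q ∈ W, ∃ T ∈ Dset μ, q ∈ pfun μ T ∧ pfun μ T ⊆ W) :
    W ∈ delineated μ := by
  have hW : W = ⋃ T ∈ {T ∈ Dset μ | pfun μ T ⊆ W}, pfun μ T := by
    apply Set.Subset.antisymm
    · intro q hq
      obtain ⟨T, hT, hqT, hTW⟩ := h q hq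
      exact Set.mem_biUnion ⟨hT, hTW⟩ hqT
    · intro q hq
      simp only [Set.mem_iUnion] at hq
      obtain ⟨T, ⟨-, hTW⟩, hq⟩ := hq
      exact hTW hq
  rw [hW]
  exact union_atoms_mem hFSM hfin hmol (fun T hT => hT.1)

lemma union_pfun_mem {K : Set Q} (hK : K ∈ delineated μ) {T : FuzzySet S}
    (hT : T ∈ Dset μ) : K ∪ pfun μ T ∈ delineated μ := by
  apply covered_mem hFSM hfin hmol
  intro q hq
  rcases hq with hq | hq
  · obtain ⟨T', h1, h2, h3⟩ := mem_cover hmol hK hq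
    exact ⟨T', h1, h2, h3.trans Set.subset_union_left⟩
  · exact ⟨T, hT, hq, Set.subset_union_right⟩

lemma sUnion_mem {𝒮 : Set (Set Q)} (h𝒮 : 𝒮 ⊆ delineated μ) :
    ⋃₀ 𝒮 ∈ delineated μ := by
  apply covered_mem hFSM hfin hmol
  intro q hq
  obtain ⟨K, hK𝒮, hqK⟩ := hq
  obtain ⟨T, h1, h2, h3⟩ := mem_cover hmol (h𝒮 hK𝒮) hqK
  exact ⟨T, h1, h2, h3.trans (Set.subset_sUnion_of_mem hK𝒮)⟩

variable (hstep : ∀ T ∈ Dset μ,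
      2 ≤ (pfun μ T).ncard →
        ∃ D ⊆ Dset μ,
          (⋃ F ∈ D, pfun μ F) ⊆ pfun μ T ∧
          (pfun μ T \ ⋃ F ∈ D, pfun μ F).ncard = 1)

include hstep

lemma add_point_aux :
    ∀ n : ℕ, ∀ T ∈ Dset μ, (pfun μ T).ncard ≤ n → ∀ K ∈ delineated μ,
      ¬ pfun μ T ⊆ K → ∃ x, x ∈ pfun μ T ∧ x ∉ K ∧ K ∪ {x} ∈ delineated μ := by
  intro n
  induction n with
  | zero =>
    intro T hT hc K hK hns
    exfalso
    apply hns
    have h0 : pfun μ T = ∅ := (Set.ncard_eq_zero (Set.toFinite _)).mp (Nat.le_zero.mp hc)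
    rw [h0]
    exact Set.empty_subset K
  | succ n IH =>
    intro T hT hc K hK hns
    obtain ⟨y, hyT, hyK⟩ := Set.not_subset.mp hns
    by_cases h1 : (pfun μ T).ncard ≤ 1
    · have hcard1 : (pfun μ T).ncard = 1 := by
        have : 0 < (pfun μ T).ncard := (Set.ncard_pos (Set.toFinite _)).mpr ⟨y, hyT⟩
        omega
      obtain ⟨z, hz⟩ := Set.ncard_eq_one.mp hcard1
      refine ⟨y, hyT, hyK, ?_⟩
      have hyz : pfun μ T = {y} := by
        rw [hz] at hyT ⊢
        rw [Set.mem_singleton_iff.mp hyT]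
      have : K ∪ {y} = K ∪ pfun μ T := by rw [hyz]
      rw [this]
      exact union_pfun_mem hFSM hfin hmol hK hT
    · push_neg at h1
      obtain ⟨D, hD, hsub, hone⟩ := hstep T hT h1
      obtain ⟨x, hxeq⟩ := Set.ncard_eq_one.mp hone
      have hxU : x ∈ pfun μ T \ ⋃ F ∈ D, pfun μ F := by
        rw [hxeq]; exact Set.mem_singleton x
      by_cases hall : ∀ T' ∈ D, pfun μ T' ⊆ K
      · have hUK : (⋃ F ∈ D, pfun μ F) ⊆ K := Set.iUnion₂_subset hall
        have hdiff : pfun μ T \ K ⊆ {x} := by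
          intro z hz
          rw [← hxeq]
          exact ⟨hz.1, fun hzU => hz.2 (hUK hzU)⟩
        have hyx : y = x := hdiff ⟨hyT, hyK⟩
        subst hyx
        refine ⟨y, hyT, hyK, ?_⟩
        have hKy : K ∪ {y} = K ∪ pfun μ T := by
          apply Set.Subset.antisymm
          · exact Set.union_subset Set.subset_union_left
              (Set.singleton_subset_iff.mpr (Or.inr hyT))
          · rintro z (hz | hz)
            · exact Or.inl hz
            · by_cases hzK : z ∈ K
              · exact Or.inl hzK
              · exact Or.inr (hdiff ⟨hz, hzK⟩)
        rw [hKy]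
        exact union_pfun_mem hFSM hfin hmol hK hT
      · push_neg at hall
        obtain ⟨T', hT'D, hT'ns⟩ := hall
        have hT'U : pfun μ T' ⊆ ⋃ F ∈ D, pfun μ F := Set.subset_biUnion_of_mem hT'D
        have hcard' : (pfun μ T').ncard ≤ n := by
          have hsubx : pfun μ T' ⊆ pfun μ T \ {x} := by
            intro z hz
            refine ⟨hsub (hT'U hz), ?_⟩
            intro hzx
            rw [Set.mem_singleton_iff.mp hzx] at hz
            exact hxU.2 (hT'U hz)
          have h2 : (pfun μ T').ncard ≤ (pfun μ T \ {x}).ncard :=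
            Set.ncard_le_ncard hsubx (Set.toFinite _)
          have h3 : (pfun μ T \ {x}).ncard = (pfun μ T).ncard - 1 :=
            Set.ncard_diff_singleton_of_mem hxU.1
          omega
        obtain ⟨x', h1', h2', h3'⟩ := IH T' (hD hT'D) hcard' K hK hT'ns
        exact ⟨x', hsub (hT'U h1'), h2', h3'⟩

lemma add_point {T : FuzzySet S} (hT : T ∈ Dset μ) {K : Set Q}
    (hK : K ∈ delineated μ) (hns : ¬ pfun μ T ⊆ K) :
    ∃ x, x ∈ pfun μ T ∧ x ∉ K ∧ K ∪ {x} ∈ delineated μ :=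
  add_point_aux hFSM hfin hmol hstep (pfun μ T).ncard T hT le_rfl K hK hns

lemma chain_up :
    ∀ n : ℕ, ∀ K L : Set Q, K ∈ delineated μ → L ∈ delineated μ → K ⊆ L →
      (L \ K).ncard = n →
      ∃ f : ℕ → Set Q, f 0 = K ∧ f n = L ∧ (∀ i ≤ n, f i ∈ delineated μ) ∧
        ∀ i, 1 ≤ i → i ≤ n → ∃ x ∉ f (i - 1), f i = f (i - 1) ∪ {x} := by
  intro n
  induction n with
  | zero =>
    intro K L hK hL hKL hc
    have he : L \ K = ∅ := (Set.ncard_eq_zero (Set.toFinite _)).mp hc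
    have hLK : K = L := by
      apply Set.Subset.antisymm hKL
      intro z hz
      by_contra hzK
      have hmem : z ∈ L \ K := ⟨hz, hzK⟩
      rw [he] at hmem
      exact hmem
    exact ⟨fun _ => K, rfl, hLK ▸ rfl, fun i _ => hK, fun i h1 h2 => by omega⟩
  | succ n IH =>
    intro K L hK hL hKL hc
    have hne : (L \ K).Nonempty := by
      rw [← Set.ncard_pos (Set.toFinite _)]; omega
    obtain ⟨q, hqL, hqK⟩ := hne
    obtain ⟨T, hT, hqT, hTL⟩ := mem_cover hmol hL hqL
    have hns : ¬ pfun μ T ⊆ K := fun h => hqK (h hqT)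
    obtain ⟨x, hxT, hxK, hK'⟩ := add_point hFSM hfin hmol hstep hT hK hns
    have hxL : x ∈ L := hTL hxT
    have hK'L : K ∪ {x} ⊆ L := Set.union_subset hKL (Set.singleton_subset_iff.mpr hxL)
    have hc' : (L \ (K ∪ {x})).ncard = n := by
      have hdiff : L \ (K ∪ {x}) = (L \ K) \ {x} := by
        ext z
        simp only [Set.mem_diff, Set.mem_union, Set.mem_singleton_iff]
        tauto
      have hx' : x ∈ L \ K := ⟨hxL, hxK⟩
      rw [hdiff, Set.ncard_diff_singleton_of_mem hx', hc]
      omega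
    obtain ⟨g, hg0, hgn, hgmem, hgstep⟩ := IH (K ∪ {x}) L hK' hL hK'L hc'
    refine ⟨fun j => if j = 0 then K else g (j - 1), rfl, ?_, ?_, ?_⟩
    · show (if n + 1 = 0 then K else g (n + 1 - 1)) = L
      rw [if_neg (by omega : ¬ n + 1 = 0), Nat.add_sub_cancel]
      exact hgn
    · intro i hi
      by_cases hi0 : i = 0
      · simp [hi0, hK]
      · show (if i = 0 then K else g (i - 1)) ∈ delineated μ
        rw [if_neg hi0]
        exact hgmem (i - 1) (by omega)
    · intro i h1 h2
      by_cases hi1 : i = 1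
      · subst hi1
        show ∃ y ∉ (if 1 - 1 = 0 then K else g (1 - 1 - 1)),
          (if 1 = 0 then K else g (1 - 1)) = (if 1 - 1 = 0 then K else g (1 - 1 - 1)) ∪ {y}
        norm_num
        exact ⟨x, hxK, by rw [hg0, Set.union_singleton]⟩
      · show ∃ y ∉ (if i - 1 = 0 then K else g (i - 1 - 1)),
          (if i = 0 then K else g (i - 1)) = (if i - 1 = 0 then K else g (i - 1 - 1)) ∪ {y}
        rw [if_neg (show ¬ i = 0 by omega), if_neg (show ¬ i - 1 = 0 by omega)]
        exact hgstep (i - 1) (by omega) (by omega)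

lemma wg : WellGraded (delineated μ) := by
  intro K hK L hL hne
  have hM : K ∪ L ∈ delineated μ := by
    rw [← Set.sUnion_pair]
    exact sUnion_mem hFSM hfin hmol (by rintro M (rfl | rfl) <;> assumption)
  set a := ((K ∪ L) \ K).ncard with ha
  set b := ((K ∪ L) \ L).ncard with hb
  obtain ⟨g, hg0, hga, hgmem, hgstep⟩ :=
    chain_up hFSM hfin hmol hstep a K (K ∪ L) hK hM Set.subset_union_left rfl
  obtain ⟨h, hh0, hhb, hhmem, hhstep⟩ :=
    chain_up hFSM hfin hmol hstep b L (K ∪ L) hL hM Set.subset_union_right rfl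
  have hdis : Disjoint (K \ L) (L \ K) := by
    rw [Set.disjoint_left]
    rintro z ⟨-, hz2⟩ ⟨hz3, -⟩
    exact hz2 hz3
  have hd : sdist K L = a + b := by
    rw [sdist, Set.symmDiff_def, Set.ncard_union_eq hdis (Set.toFinite _) (Set.toFinite _),
      ha, hb, Set.union_diff_left, Set.union_diff_right]
    omega
  refine ⟨fun i => if i ≤ a then g i else h (sdist K L - i), ?_, ?_, ?_, ?_⟩
  · beta_reduce
    rw [if_pos (Nat.zero_le a)]
    exact hg0
  · beta_reduce
    by_cases hb0 : b = 0
    · have hML : K ∪ L = L := by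
        have he : (K ∪ L) \ L = ∅ := (Set.ncard_eq_zero (Set.toFinite _)).mp (hb ▸ hb0)
        apply Set.Subset.antisymm _ Set.subset_union_right
        intro z hz
        by_contra hzL
        have : z ∈ (K ∪ L) \ L := ⟨hz, hzL⟩
        rw [he] at this
        exact this
      rw [if_pos (by omega : sdist K L ≤ a), show sdist K L = a by omega, hga, hML]
    · rw [if_neg (by omega : ¬ sdist K L ≤ a), Nat.sub_self]
      exact hh0
  · intro i hi
    beta_reduce
    by_cases hia : i ≤ a
    · rw [if_pos hia]; exact hgmem i hia
    · rw [if_neg hia]; exact hhmem (sdist K L - i) (by omega)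
  · intro i h1 h2
    beta_reduce
    by_cases hia : i ≤ a
    · rw [if_pos hia, if_pos (by omega : i - 1 ≤ a)]
      obtain ⟨x, hx1, hx2⟩ := hgstep i h1 hia
      rw [hx2]
      exact sdist_insert hx1
    · by_cases hia1 : i - 1 ≤ a
      · have hieq : i = a + 1 := by omega
        have hb1 : 1 ≤ b := by omega
        rw [if_pos hia1, if_neg hia, show i - 1 = a by omega, hga,
          show sdist K L - i = b - 1 by omega]
        obtain ⟨x, hx1, hx2⟩ := hhstep b hb1 le_rfl
        rw [← hhb, hx2, sdist_comm]
        exact sdist_insert hx1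
      · rw [if_neg hia, if_neg hia1]
        have hj1 : 1 ≤ sdist K L - (i - 1) := by omega
        have hj2 : sdist K L - (i - 1) ≤ b := by omega
        obtain ⟨x, hx1, hx2⟩ := hhstep (sdist K L - (i - 1)) hj1 hj2
        rw [show sdist K L - (i - 1) - 1 = sdist K L - i by omega] at hx1 hx2
        rw [hx2, sdist_comm]
        exact sdist_insert hx1

end StmtSixAux

/-- If `Q` is finite, each `μ(q)` is finite, every competency contains a
molecule of `μ(q)`, and the molecule condition (3) holds, then the delineated knowledge
structure is a learning space. Here `𝒟` is the set of molecules in `⋃_q μ(q)` and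
`[𝒟'] = ⋃_{F ∈ 𝒟'} p(F)`. -/
theorem stmt_6 {Q S : Type*} [Nonempty Q] [Finite Q] [Nonempty S]
    (μ : Q → Set (FuzzySet S)) (hFSM : FSM μ) (hfin : ∀ q, (μ q).Finite)
    (hmol : ∀ q, ∀ C ∈ μ q, ∃ T : FuzzySet S, Molecule T ∧ T ≤ C ∧ T ∈ μ q)
    (hstep : ∀ T ∈ {T : FuzzySet S | Molecule T ∧ ∃ q, T ∈ μ q},
      2 ≤ (pfun μ T).ncard →
        ∃ D ⊆ {T : FuzzySet S | Molecule T ∧ ∃ q, T ∈ μ q},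
          (⋃ F ∈ D, pfun μ F) ⊆ pfun μ T ∧
          (pfun μ T \ ⋃ F ∈ D, pfun μ F).ncard = 1) :
    IsLearningSpace (delineated μ) := by
  constructor
  · refine ⟨⟨0, pfun_zero hFSM⟩, ⟨fun _ => 1, ?_⟩, fun 𝒮 h𝒮 => sUnion_mem hFSM hfin hmol h𝒮⟩
    apply Set.eq_univ_of_forall
    intro q
    obtain ⟨C, hC⟩ := (hFSM q).1
    exact ⟨C, hC, fun s => unitInterval.le_one'⟩
  · exact wg hFSM hfin hmol hstep
end

section
/- Let (Q, S, μ) be a fuzzy skill multimap and (Q, 𝒦) the delineated knowledge structure. Then (Q, 𝒦) is discriminative if and only if for any two distinct items q, r ∈ Q, either μ(q) ⋠ μ(r) or μ(r) ⋠ μ(q). -/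
/-- `𝒰 ≼ 𝒱`: `𝒰` is refined by `𝒱`, i.e. every `U ∈ 𝒰` contains some `V ∈ 𝒱`. -/
def Refines {S : Type*} (U V : Set (FuzzySet S)) : Prop :=
  ∀ C ∈ U, ∃ D ∈ V, D ≤ C

theorem Kq_delineated_subset_iff {Q S : Type*} (μ : Q → Set (FuzzySet S)) (q r : Q) :
    Kq (delineated μ) q ⊆ Kq (delineated μ) r ↔ Refines (μ q) (μ r) := by
  constructor
  · intro h C hC
    -- `p(C)` is a knowledge state containing `q`, hence `r`.
    exact (h ⟨⟨C, rfl⟩, C, hC, le_rfl⟩).2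
  · rintro h K ⟨⟨F, rfl⟩, C, hC, hCF⟩
    obtain ⟨D, hD, hDC⟩ := h C hC
    exact ⟨⟨F, rfl⟩, D, hD, hDC.trans hCF⟩

theorem stmt_9_general {Q S : Type*}
    (μ : Q → Set (FuzzySet S)) :
    Discriminative (delineated μ) ↔
      ∀ q r : Q, q ≠ r → ¬ Refines (μ q) (μ r) ∨ ¬ Refines (μ r) (μ q) := by
  refine forall₂_congr fun q r => imp_congr_right fun _ => ?_
  rw [Ne, Set.Subset.antisymm_iff, Kq_delineated_subset_iff, Kq_delineated_subset_iff, not_and_or]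

/-- The delineated knowledge structure is discriminative iff for all
distinct `q, r`, either `μ(q) ⋠ μ(r)` or `μ(r) ⋠ μ(q)`. -/
theorem stmt_9 {Q S : Type*} [Nonempty Q] [Nonempty S]
    (μ : Q → Set (FuzzySet S)) (hFSM : FSM μ) :
    Discriminative (delineated μ) ↔
      ∀ q r : Q, q ≠ r → ¬ Refines (μ q) (μ r) ∨ ¬ Refines (μ r) (μ q) :=
  stmt_9_general μ
end

section
/- Let (Q, S, μ) be a fuzzy skill function and (Q, 𝒦) the delineated knowledge structure. Then (Q, 𝒦) is discriminative if and only if μ(q) ≠ μ(r) for any two distinct items q, r ∈ Q. -/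
/-! An item `q` belongs to `p(F)` exactly when `F` lies in the upper closure of `μ(q)`, so
`𝒦_q` determines, and is determined by, that upper closure. For a fuzzy skill function each
`μ(q)` is an antichain, and an antichain is recovered from its upper closure as the set of
minimal elements; hence `𝒦_q = 𝒦_r` iff `μ(q) = μ(r)`. -/

theorem IsAntichain.upperClosure_inj {α : Type*} [PartialOrder α] {s t : Set α}
    (hs : IsAntichain (· ≤ ·) s) (ht : IsAntichain (· ≤ ·) t) :
    upperClosure s = upperClosure t ↔ s = t := by
  refine ⟨fun h => ?_, congrArg upperClosure⟩
  ext x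
  rw [← hs.minimal_mem_upperClosure_iff_mem, h, ht.minimal_mem_upperClosure_iff_mem]

theorem mem_pfun_iff_mem_upperClosure {Q S : Type*} (μ : Q → Set (FuzzySet S)) (q : Q)
    (F : FuzzySet S) : q ∈ pfun μ F ↔ F ∈ upperClosure (μ q) :=
  mem_upperClosure.symm

theorem Kq_delineated_eq_iff {Q S : Type*} (μ : Q → Set (FuzzySet S)) (q r : Q) :
    Kq (delineated μ) q = Kq (delineated μ) r ↔ upperClosure (μ q) = upperClosure (μ r) := by
  simp only [Kq, Set.ext_iff, Set.mem_sep_iff, and_congr_right_iff, delineated,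
    Set.forall_mem_range, mem_pfun_iff_mem_upperClosure, SetLike.ext_iff]

theorem stmt_10_general {Q S : Type*}
    (μ : Q → Set (FuzzySet S))
    (hincomp : ∀ q, ∀ C ∈ μ q, ∀ D ∈ μ q, C ≤ D → C = D) :
    Discriminative (delineated μ) ↔ ∀ q r : Q, q ≠ r → μ q ≠ μ r := by
  have hanti (q : Q) : IsAntichain (· ≤ ·) (μ q) :=
    fun C hC D hD hne hle => hne (hincomp q C hC D hD hle)
  refine forall₂_congr fun q r => imp_congr_right fun _ => not_congr ?_
  rw [Kq_delineated_eq_iff, (hanti q).upperClosure_inj (hanti r)]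

/-- For a fuzzy skill function (elements of each `μ(q)` pairwise
incomparable), the delineated knowledge structure is discriminative iff `μ` is
injective on items, i.e. `μ(q) ≠ μ(r)` for distinct `q, r`. -/
theorem stmt_10 {Q S : Type*} [Nonempty Q] [Nonempty S]
    (μ : Q → Set (FuzzySet S)) (hFSM : FSM μ)
    (hincomp : ∀ q, ∀ C ∈ μ q, ∀ D ∈ μ q, C ≤ D → C = D) :
    Discriminative (delineated μ) ↔ ∀ q r : Q, q ≠ r → μ q ≠ μ r :=
  stmt_10_general μ hincomp
end

section
/- Let (Q, S, μ) be a fuzzy skill multimap and (Q, 𝒦) the delineated knowledge structure. Assume that for every q ∈ Q and every C ∈ μ(q) there is a designated competency M_{q,C} ∈ μ(q) with M_{q,C} ⊆ C which is a minimal element of μ(q) (no D ∈ μ(q) satisfies D ⊆ M_{q,C} and D ≠ M_{q,C}). Then the following are equivalent: (1) (Q, 𝒦) is discriminative; (2) for any pair of distinct items q, r ∈ Q, either there exists C ∈ μ(q) with M_{q,C} ≠ M_{r,D} for every D ∈ μ(r), or there exists D ∈ μ(r) with M_{r,D} ≠ M_{q,C} for every C ∈ μ(q); (3) for any pair of distinct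 items q, r ∈ Q, either there exists C ∈ μ(q) with M_{q,C} ⋠ {M_{r,D} : D ∈ μ(r)}, or there exists D ∈ μ(r) with M_{r,D} ⋠ {M_{q,C} : C ∈ μ(q)}. -/
/-!
Two items have the same states `𝒦_q = 𝒦_r` exactly when they are solved by the same fuzzy
sets, i.e. when `μ q` and `μ r` have the same upper closure. Replacing every competency by its
designated minimal one does not change the upper closure, and the designated minimal
competencies of an item form an antichain, which is recovered from its upper closure as its
set of minimal elements. So discriminativity says that the antichains of distinct items differ,
which is condition (2), or equivalently that their upper closures differ, which is condition (3).
-/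

open Set

section UpperClosure

variable {α : Type*}

theorem upperClosure_eq_iff_subset_and_subset [Preorder α] {s t : Set α} :
    upperClosure s = upperClosure t ↔ s ⊆ upperClosure t ∧ t ⊆ upperClosure s := by
  refine ⟨fun h => ⟨h ▸ subset_upperClosure, h ▸ subset_upperClosure⟩, fun ⟨hst, hts⟩ => ?_⟩
  exact SetLike.coe_injective <|
    (upperClosure_min hst (upperClosure t).upper).antisymm
      (upperClosure_min hts (upperClosure s).upper)

theorem IsAntichain.upperClosure_eq_iff [PartialOrder α] {s t : Set α}
    (hs : IsAntichain (· ≤ ·) s) (ht : IsAntichain (· ≤ ·) t) :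
    upperClosure s = upperClosure t ↔ s = t := by
  refine ⟨fun h => ?_, congrArg upperClosure⟩
  ext x
  rw [← hs.minimal_mem_upperClosure_iff_mem, h, ht.minimal_mem_upperClosure_iff_mem]

theorem upperClosure_image_of_le [Preorder α] {s : Set α} {f : α → α}
    (hfs : ∀ a ∈ s, f a ∈ s) (hf : ∀ a ∈ s, f a ≤ a) :
    upperClosure (f '' s) = upperClosure s := by
  refine upperClosure_eq_iff_subset_and_subset.2
    ⟨?_, fun a ha => ⟨f a, mem_image_of_mem f ha, hf a ha⟩⟩
  rintro _ ⟨a, ha, rfl⟩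
  exact subset_upperClosure (hfs a ha)

theorem isAntichain_image_of_minimal [LE α] {s : Set α} {f : α → α}
    (hfs : ∀ a ∈ s, f a ∈ s) (hmin : ∀ a ∈ s, ∀ b ∈ s, b ≤ f a → b = f a) :
    IsAntichain (· ≤ ·) (f '' s) := by
  rintro _ ⟨a, ha, rfl⟩ _ ⟨b, hb, rfl⟩ hne hle
  exact hne (hmin b hb (f a) (hfs a ha) hle)

theorem image_ne_image_iff {γ δ : Type*} {f : γ → α} {g : δ → α} {s : Set γ} {t : Set δ} :
    f '' s ≠ g '' t ↔ (∃ a ∈ s, ∀ b ∈ t, f a ≠ g b) ∨ (∃ b ∈ t, ∀ a ∈ s, g b ≠ f a) := by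
  rw [Ne, subset_antisymm_iff, not_and_or]
  simp [subset_def, eq_comm]

theorem upperClosure_image_ne_iff [Preorder α] {γ δ : Type*} {f : γ → α} {g : δ → α}
    {s : Set γ} {t : Set δ} :
    upperClosure (f '' s) ≠ upperClosure (g '' t) ↔
      (∃ a ∈ s, ¬ ∃ b ∈ t, g b ≤ f a) ∨ (∃ b ∈ t, ¬ ∃ a ∈ s, f a ≤ g b) := by
  rw [Ne, upperClosure_eq_iff_subset_and_subset, not_and_or]
  simp [subset_def]

end UpperClosure

theorem Kq_range_eq_iff {Q X : Type*} (f : X → Set Q) (q r : Q) :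
    Kq (range f) q = Kq (range f) r ↔ ∀ x, q ∈ f x ↔ r ∈ f x := by
  refine ⟨fun h x => by simpa [Kq] using congrArg (f x ∈ ·) h, fun h => ?_⟩
  ext K
  simp only [Kq, mem_ofPred_eq, mem_range]
  constructor
  · rintro ⟨⟨x, rfl⟩, hq⟩
    exact ⟨⟨x, rfl⟩, (h x).1 hq⟩
  · rintro ⟨⟨x, rfl⟩, hr⟩
    exact ⟨⟨x, rfl⟩, (h x).2 hr⟩

theorem mem_pfun_iff {Q S : Type*} {μ : Q → Set (FuzzySet S)} {F : FuzzySet S} {q : Q} :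
    q ∈ pfun μ F ↔ F ∈ upperClosure (μ q) :=
  Iff.rfl

theorem discriminative_delineated_iff {Q S : Type*} (μ : Q → Set (FuzzySet S)) :
    Discriminative (delineated μ) ↔
      ∀ q r, q ≠ r → upperClosure (μ q) ≠ upperClosure (μ r) := by
  simp only [Discriminative, delineated, ne_eq, Kq_range_eq_iff, mem_pfun_iff, SetLike.ext_iff]

theorem stmt_11_general {Q S : Type*}
    (μ : Q → Set (FuzzySet S))
    (M : Q → FuzzySet S → FuzzySet S)
    (hM : ∀ q, ∀ C ∈ μ q, M q C ∈ μ q ∧ M q C ≤ C ∧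
      ∀ D ∈ μ q, D ≤ M q C → D = M q C) :
    (Discriminative (delineated μ) ↔
      ∀ q r : Q, q ≠ r →
        (∃ C ∈ μ q, ∀ D ∈ μ r, M q C ≠ M r D) ∨
        (∃ D ∈ μ r, ∀ C ∈ μ q, M r D ≠ M q C)) ∧
    (Discriminative (delineated μ) ↔
      ∀ q r : Q, q ≠ r →
        (∃ C ∈ μ q, ¬ ∃ D ∈ μ r, M r D ≤ M q C) ∨
        (∃ D ∈ μ r, ¬ ∃ C ∈ μ q, M q C ≤ M r D)) := by
  have hclosure (q : Q) : upperClosure (M q '' μ q) = upperClosure (μ q) :=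
    upperClosure_image_of_le (fun C hC => (hM q C hC).1) (fun C hC => (hM q C hC).2.1)
  have hanti (q : Q) : IsAntichain (· ≤ ·) (M q '' μ q) :=
    isAntichain_image_of_minimal (fun C hC => (hM q C hC).1) (fun C hC => (hM q C hC).2.2)
  rw [discriminative_delineated_iff]
  refine ⟨forall₃_congr fun q r _ => ?_, forall₃_congr fun q r _ => ?_⟩
  · rw [← hclosure, ← hclosure, Ne, (hanti q).upperClosure_eq_iff (hanti r), ← Ne,
      image_ne_image_iff]
  · rw [← hclosure, ← hclosure, upperClosure_image_ne_iff]

/-- With a designated minimal competency `M q C ∈ μ(q)` below each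
`C ∈ μ(q)`, discriminativity of the delineated structure is equivalent to each of the
two conditions (2) and (3). -/
theorem stmt_11 {Q S : Type*} [Nonempty Q] [Nonempty S]
    (μ : Q → Set (FuzzySet S)) (hFSM : FSM μ)
    (M : Q → FuzzySet S → FuzzySet S)
    (hM : ∀ q, ∀ C ∈ μ q, M q C ∈ μ q ∧ M q C ≤ C ∧
      ∀ D ∈ μ q, D ≤ M q C → D = M q C) :
    (Discriminative (delineated μ) ↔
      ∀ q r : Q, q ≠ r →
        (∃ C ∈ μ q, ∀ D ∈ μ r, M q C ≠ M r D) ∨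
        (∃ D ∈ μ r, ∀ C ∈ μ q, M r D ≠ M q C)) ∧
    (Discriminative (delineated μ) ↔
      ∀ q r : Q, q ≠ r →
        (∃ C ∈ μ q, ¬ ∃ D ∈ μ r, M r D ≤ M q C) ∨
        (∃ D ∈ μ r, ¬ ∃ C ∈ μ q, M q C ≤ M r D)) :=
  stmt_11_general μ M hM
end

section
/- Let S be a nonempty subset of a nonempty skill set S', let (Q, S', μ') be a fuzzy skill multimap, and let (Q, S, μ) be a fuzzy skill multimap obtained by restriction: for each q ∈ Q, μ(q) = {C'·χ_S : C' ∈ μ'(q)}, where C'·χ_S is the fuzzy set on S' defined by (C'·χ_S)(s) = C'(s) for s ∈ S and 0 otherwise (assume each C'·χ_S is nonzero). Let (Q, 𝒦') be the knowledge structure delineated by (Q, S', μ') and let (Q, 𝒦) be delineated by (Q, S, μ), i.e. 𝒦 = {p(F) : F a fuzzy set on S' vanishing outside S}, where p is the problem function induced by μ. If (Q, 𝒦) is discriminative then (Q, 𝒦') is discriminative, and if (Q, 𝒦) is bi-discriminative then (Q, 𝒦') is bi-discriminative. -/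
/-!
For a fuzzy set `F` on `S'`, the state `p(F)` of the restricted multimap is the state
`p'(F̂)` of the original one, where `F̂` agrees with `F` on `S` and is `1` off `S`.
Hence `𝒦 ⊆ 𝒦'`, and (bi-)discriminativity passes to any larger knowledge structure on
the same domain because `𝒦_q = 𝒦 ∩ 𝒦'_q`.
-/

theorem Kq_subset_Kq_of_subset {Q : Type*} {𝒦 𝒦' : Set (Set Q)} (h : 𝒦 ⊆ 𝒦') {q r : Q}
    (hqr : Kq 𝒦' q ⊆ Kq 𝒦' r) : Kq 𝒦 q ⊆ Kq 𝒦 r :=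
  fun _ ⟨hK, hqK⟩ => ⟨hK, (hqr ⟨h hK, hqK⟩).2⟩

theorem Discriminative.mono {Q : Type*} {𝒦 𝒦' : Set (Set Q)} (h : 𝒦 ⊆ 𝒦')
    (hd : Discriminative 𝒦) : Discriminative 𝒦' := fun q r hqr heq =>
  hd q r hqr ((Kq_subset_Kq_of_subset h heq.le).antisymm (Kq_subset_Kq_of_subset h heq.ge))

theorem BiDiscriminative.mono {Q : Type*} {𝒦 𝒦' : Set (Set Q)} (h : 𝒦 ⊆ 𝒦')
    (hd : BiDiscriminative 𝒦) : BiDiscriminative 𝒦' := fun q r hqr =>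
  ⟨fun hsub => (hd q r hqr).1 (Kq_subset_Kq_of_subset h hsub),
    fun hsub => (hd q r hqr).2 (Kq_subset_Kq_of_subset h hsub)⟩

theorem FuzzySet.indicator_le_iff_le_piecewise_one {S' : Type*} (S : Set S')
    [DecidablePred (· ∈ S)] (C F : FuzzySet S') : S.indicator C ≤ F ↔ C ≤ S.piecewise F 1 := by
  refine forall_congr' fun s => ?_
  by_cases hs : s ∈ S
  · simp only [Set.indicator_of_mem hs, Set.piecewise_eq_of_mem _ _ _ hs]
  · simp only [Set.indicator_of_notMem hs, Set.piecewise_eq_of_notMem _ _ _ hs, Pi.one_apply,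
      unitInterval.nonneg', unitInterval.le_one']

theorem pfun_image_indicator {Q S' : Type*} (S : Set S') [DecidablePred (· ∈ S)]
    (μ' : Q → Set (FuzzySet S')) (F : FuzzySet S') :
    pfun (fun q => S.indicator '' μ' q) F = pfun μ' (S.piecewise F 1) := by
  ext q
  simp only [pfun, Set.mem_ofPred_eq, Set.exists_mem_image,
    FuzzySet.indicator_le_iff_le_piecewise_one]

theorem pfun_image_indicator_mem_delineated {Q S' : Type*} (S : Set S')
    (μ' : Q → Set (FuzzySet S')) (F : FuzzySet S') :
    pfun (fun q => S.indicator '' μ' q) F ∈ delineated μ' := by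
  classical
  exact ⟨S.piecewise F 1, (pfun_image_indicator S μ' F).symm⟩

theorem stmt_15_general {Q S' : Type*}
    (S : Set S')
    (μ' : Q → Set (FuzzySet S'))
    (μ : Q → Set (FuzzySet S'))
    (hμ : ∀ q, μ q = (fun C' : FuzzySet S' => S.indicator C') '' μ' q)
    (𝒦 : Set (Set Q))
    (h𝒦 : 𝒦 = (fun F => pfun μ F) '' {F : FuzzySet S' | ∀ s ∉ S, F s = 0}) :
    (Discriminative 𝒦 → Discriminative (delineated μ')) ∧
    (BiDiscriminative 𝒦 → BiDiscriminative (delineated μ')) := by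
  obtain rfl : μ = fun q => S.indicator '' μ' q := funext hμ
  have h𝒦_subset : 𝒦 ⊆ delineated μ' := by
    rw [h𝒦]
    rintro _ ⟨F, -, rfl⟩
    exact pfun_image_indicator_mem_delineated S μ' F
  exact ⟨Discriminative.mono h𝒦_subset, BiDiscriminative.mono h𝒦_subset⟩

/-- Let `S ⊆ S'` be nonempty, `(Q, S', μ')` a fuzzy skill multimap, and
`μ` its restriction to `S` given by `μ(q) = {C'·χ_S : C' ∈ μ'(q)}` (zero outside `S`),
assumed nonzero. If the knowledge structure `𝒦 = {p(F) : F vanishing outside S}`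
delineated by `μ` is discriminative (resp. bi-discriminative), then the knowledge
structure `𝒦'` delineated by `(Q, S', μ')` is discriminative (resp. bi-discriminative). -/
theorem stmt_15 {Q S' : Type*} [Nonempty Q] [Nonempty S']
    (S : Set S') (hS : S.Nonempty)
    (μ' : Q → Set (FuzzySet S')) (hFSM' : FSM μ')
    (μ : Q → Set (FuzzySet S'))
    (hμ : ∀ q, μ q = (fun C' : FuzzySet S' => S.indicator C') '' μ' q)
    (hnz : ∀ q, ∀ C ∈ μ q, C ≠ 0)
    (𝒦 : Set (Set Q))
    (h𝒦 : 𝒦 = (fun F => pfun μ F) '' {F : FuzzySet S' | ∀ s ∉ S, F s = 0}) :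
    (Discriminative 𝒦 → Discriminative (delineated μ')) ∧
    (BiDiscriminative 𝒦 → BiDiscriminative (delineated μ')) :=
  stmt_15_general S μ' μ hμ 𝒦 h𝒦
end

section
/- Let (Q', S, μ') be a fuzzy skill multimap, let Q be a nonempty subset of Q', and let (Q, S, μ) be the submultimap defined by μ(q) = μ'(q) for each q ∈ Q. If (Q', 𝒦') and (Q, 𝒦) are the knowledge structures delineated by (Q', S, μ') and (Q, S, μ) respectively, then 𝒦 = {K' ∩ Q : K' ∈ 𝒦'}, i.e. (Q, 𝒦) is a substructure of (Q', 𝒦') and 𝒦 is the trace of 𝒦' on Q. In particular, p(T) = p'(T) ∩ Q for every fuzzy set T on S, where p and p' are the induced problem functions. -/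
theorem sep_exists_le_eq_pfun_inter {Q S : Type*} (μ : Q → Set (FuzzySet S)) (R : Set Q)
    (F : FuzzySet S) : {q ∈ R | ∃ C ∈ μ q, C ≤ F} = pfun μ F ∩ R :=
  Set.sep_mem_eq.trans (Set.inter_comm _ _)

theorem range_pfun_inter_eq_image_delineated {Q S : Type*} (μ : Q → Set (FuzzySet S))
    (R : Set Q) : Set.range (fun F => pfun μ F ∩ R) = (· ∩ R) '' delineated μ :=
  Set.range_comp (· ∩ R) (pfun μ)

theorem stmt_16_general {Q' S : Type*}
    (μ' : Q' → Set (FuzzySet S))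
    (Q : Set Q') :
    Set.range (fun F : FuzzySet S => {q ∈ Q | ∃ C ∈ μ' q, C ≤ F}) =
      (fun K => K ∩ Q) '' delineated μ' ∧
    ∀ T : FuzzySet S, {q ∈ Q | ∃ C ∈ μ' q, C ≤ T} = pfun μ' T ∩ Q := by
  have hp := sep_exists_le_eq_pfun_inter μ' Q
  refine ⟨?_, hp⟩
  rw [← range_pfun_inter_eq_image_delineated]
  exact congrArg Set.range (funext hp)

/-- If `(Q, S, μ)` is the submultimap of `(Q', S, μ')` on a nonempty
subset `Q ⊆ Q'` (with `μ(q) = μ'(q)` for `q ∈ Q`), then the delineated structure `𝒦`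
is the trace of `𝒦'` on `Q`, i.e. `𝒦 = {K' ∩ Q : K' ∈ 𝒦'}`, and moreover
`p(T) = p'(T) ∩ Q` for every fuzzy set `T`. -/
theorem stmt_16 {Q' S : Type*} [Nonempty Q'] [Nonempty S]
    (μ' : Q' → Set (FuzzySet S)) (hFSM' : FSM μ')
    (Q : Set Q') (hQ : Q.Nonempty) :
    Set.range (fun F : FuzzySet S => {q ∈ Q | ∃ C ∈ μ' q, C ≤ F}) =
      (fun K => K ∩ Q) '' delineated μ' ∧
    ∀ T : FuzzySet S, {q ∈ Q | ∃ C ∈ μ' q, C ≤ T} = pfun μ' T ∩ Q :=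
  stmt_16_general μ' Q
end

section
/- Let {(Q_i, S_i, μ_i) : i ∈ I} be a family of fuzzy skill functions whose merge (Q, S, μ) is a distributed fuzzy skill function, let (Q, 𝒦) be the knowledge structure delineated by (Q, S, μ), and for each i ∈ I let (Q_i, 𝒦_i) be the knowledge structure delineated by (Q_i, S_i, μ_i). If the family {Q_i : i ∈ I} is pairwise disjoint, then: if (Q, 𝒦) is discriminative, each (Q_i, 𝒦_i) is discriminative; and if (Q, 𝒦) is bi-discriminative, each (Q_i, 𝒦_i) is bi-discriminative. -/
/-!
With disjoint item domains, the competencies of an item of `Q_i` in the merge are exactly its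
local ones. Every global state `p(F)` then traces on `Q_i` to the local state of `F` restricted
to `S_i`, since local competencies vanish outside `S_i`. Hence `𝒦_{i,q} ⊆ 𝒦_{i,r}` forces
`𝒦_q ⊆ 𝒦_r`, and both (bi-)discriminativity properties descend from `𝒦` to `𝒦_i`.
-/

/-- The structure `𝒦_i` delineated by a local fuzzy skill function `(A, T, ν)`. -/
def localDelineated {Q S : Type*} (A : Set Q) (T : Set S) (ν : Q → Set (FuzzySet S)) :
    Set (Set Q) :=
  (fun F => A ∩ pfun ν F) '' {F : FuzzySet S | ∀ s ∉ T, F s = 0}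

theorem mem_pfun_indicator_iff {Q S : Type*} {ν : Q → Set (FuzzySet S)} {T : Set S} {q : Q}
    (hvanish : ∀ C ∈ ν q, ∀ s ∉ T, C s = 0) (F : FuzzySet S) :
    q ∈ pfun ν (T.indicator F) ↔ q ∈ pfun ν F := by
  constructor
  · rintro ⟨C, hC, hCF⟩
    exact ⟨C, hC, hCF.trans (Set.indicator_le_self' fun _ _ => unitInterval.nonneg _)⟩
  · rintro ⟨C, hC, hCF⟩
    refine ⟨C, hC, fun s => ?_⟩
    by_cases hs : s ∈ T
    · simpa [hs] using hCF s
    · simp [hs, hvanish C hC s hs]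

theorem mem_pfun_congr {Q S : Type*} {μ ν : Q → Set (FuzzySet S)} {q : Q} (h : μ q = ν q)
    (F : FuzzySet S) : q ∈ pfun μ F ↔ q ∈ pfun ν F := by
  simp only [pfun, Set.mem_ofPred_eq, h]

theorem Kq_delineated_subset_of_Kq_localDelineated_subset {Q S : Type*} {A : Set Q} {T : Set S}
    {ν μ : Q → Set (FuzzySet S)} (hμν : ∀ p ∈ A, μ p = ν p)
    (hvanish : ∀ p ∈ A, ∀ C ∈ ν p, ∀ s ∉ T, C s = 0) {q r : Q} (hq : q ∈ A) (hr : r ∈ A)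
    (h : Kq (localDelineated A T ν) q ⊆ Kq (localDelineated A T ν) r) :
    Kq (delineated μ) q ⊆ Kq (delineated μ) r := by
  rintro _ ⟨⟨F, rfl⟩, hqF⟩
  have hlocal : A ∩ pfun ν (T.indicator F) ∈ localDelineated A T ν :=
    ⟨T.indicator F, fun _ hs => Set.indicator_of_notMem hs F, rfl⟩
  have hq' : q ∈ pfun ν (T.indicator F) := by
    rwa [mem_pfun_indicator_iff (hvanish q hq), ← mem_pfun_congr (hμν q hq)]
  obtain ⟨-, -, hr'⟩ := h ⟨hlocal, hq, hq'⟩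
  rw [mem_pfun_indicator_iff (hvanish r hr)] at hr'
  exact ⟨⟨F, rfl⟩, (mem_pfun_congr (hμν r hr) F).mpr hr'⟩

theorem merge_eq_of_pairwise_disjoint {ι Q S : Type*} {Qi : ι → Set Q}
    {μi : ι → Q → Set (FuzzySet S)} {μ : Q → Set (FuzzySet S)}
    (hμ : ∀ q, μ q = {C | ∃ i, q ∈ Qi i ∧ C ∈ μi i q})
    (hQdisj : Pairwise fun i j => Disjoint (Qi i) (Qi j))
    {i : ι} {q : Q} (hq : q ∈ Qi i) : μ q = μi i q := by
  rw [hμ]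
  ext C
  constructor
  · rintro ⟨j, hqj, hC⟩
    obtain rfl : j = i := by_contra fun hji => (hQdisj hji).notMem_of_mem_left hqj hq
    exact hC
  · exact fun hC => ⟨i, hq, hC⟩

theorem stmt_17_general {ι Q S : Type*}
    (Qi : ι → Set Q) (Si : ι → Set S)
    (μi : ι → Q → Set (FuzzySet S))
    (hvanish : ∀ i, ∀ q ∈ Qi i, ∀ C ∈ μi i q, ∀ s ∉ Si i, C s = 0)
    (μ : Q → Set (FuzzySet S))
    (hμ : ∀ q, μ q = {C | ∃ i, q ∈ Qi i ∧ C ∈ μi i q})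
    (Ki : ι → Set (Set Q))
    (hKi : ∀ i, Ki i = (fun F => {q ∈ Qi i | ∃ C ∈ μi i q, C ≤ F}) ''
      {F : FuzzySet S | ∀ s ∉ Si i, F s = 0})
    (hQdisj : ∀ i j, i ≠ j → Disjoint (Qi i) (Qi j)) :
    (Discriminative (delineated μ) →
      ∀ i, ∀ q ∈ Qi i, ∀ r ∈ Qi i, q ≠ r → Kq (Ki i) q ≠ Kq (Ki i) r) ∧
    (BiDiscriminative (delineated μ) →
      ∀ i, ∀ q ∈ Qi i, ∀ r ∈ Qi i, q ≠ r →
        ¬ Kq (Ki i) q ⊆ Kq (Ki i) r ∧ ¬ Kq (Ki i) r ⊆ Kq (Ki i) q) := by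
  have hlift : ∀ i, ∀ q ∈ Qi i, ∀ r ∈ Qi i,
      Kq (Ki i) q ⊆ Kq (Ki i) r → Kq (delineated μ) q ⊆ Kq (delineated μ) r := by
    intro i q hq r hr
    rw [hKi i]
    exact Kq_delineated_subset_of_Kq_localDelineated_subset
      (fun p hp => merge_eq_of_pairwise_disjoint hμ hQdisj hp) (hvanish i) hq hr
  constructor
  · intro hdisc i q hq r hr hne heq
    exact hdisc q r hne (subset_antisymm (hlift i q hq r hr heq.le) (hlift i r hr q hq heq.ge))
  · intro hbi i q hq r hr hne
    obtain ⟨hqr, hrq⟩ := hbi q r hne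
    exact ⟨fun h => hqr (hlift i q hq r hr h), fun h => hrq (hlift i r hr q hq h)⟩

/-- For a family of fuzzy skill functions `(Q_i, S_i, μ_i)` whose merge
`(Q, S, μ)` is a distributed fuzzy skill function, if the item domains `Q_i` are
pairwise disjoint, then discriminativity (resp. bi-discriminativity) of the global
delineated structure implies that of each local delineated structure. -/
theorem stmt_17 {ι Q S : Type*} [Nonempty Q] [Nonempty S]
    (Qi : ι → Set Q) (Si : ι → Set S)
    (hQcover : ⋃ i, Qi i = Set.univ) (hScover : ⋃ i, Si i = Set.univ)
    (hQine : ∀ i, (Qi i).Nonempty) (hSine : ∀ i, (Si i).Nonempty)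
    (μi : ι → Q → Set (FuzzySet S))
    (hine : ∀ i, ∀ q ∈ Qi i, (μi i q).Nonempty)
    (hinz : ∀ i, ∀ q ∈ Qi i, ∀ C ∈ μi i q, C ≠ 0)
    (hvanish : ∀ i, ∀ q ∈ Qi i, ∀ C ∈ μi i q, ∀ s ∉ Si i, C s = 0)
    (hincomp : ∀ i, ∀ q ∈ Qi i, ∀ C ∈ μi i q, ∀ D ∈ μi i q, C ≤ D → C = D)
    (μ : Q → Set (FuzzySet S))
    (hμ : ∀ q, μ q = {C | ∃ i, q ∈ Qi i ∧ C ∈ μi i q})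
    (hdistr : ∀ q, ∀ C ∈ μ q, ∀ D ∈ μ q, C ≤ D → C = D)
    (Ki : ι → Set (Set Q))
    (hKi : ∀ i, Ki i = (fun F => {q ∈ Qi i | ∃ C ∈ μi i q, C ≤ F}) ''
      {F : FuzzySet S | ∀ s ∉ Si i, F s = 0})
    (hQdisj : ∀ i j, i ≠ j → Disjoint (Qi i) (Qi j)) :
    (Discriminative (delineated μ) →
      ∀ i, ∀ q ∈ Qi i, ∀ r ∈ Qi i, q ≠ r → Kq (Ki i) q ≠ Kq (Ki i) r) ∧
    (BiDiscriminative (delineated μ) →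
      ∀ i, ∀ q ∈ Qi i, ∀ r ∈ Qi i, q ≠ r →
        ¬ Kq (Ki i) q ⊆ Kq (Ki i) r ∧ ¬ Kq (Ki i) r ⊆ Kq (Ki i) q) :=
  stmt_17_general Qi Si μi hvanish μ hμ Ki hKi hQdisj
end

section
/- Let {(Q_i, S_i, μ_i) : i ∈ I} be a family of fuzzy skill functions whose merge (Q, S, μ) is a distributed fuzzy skill function, let (Q, 𝒦) be the knowledge structure delineated by (Q, S, μ), and for each i ∈ I let (Q_i, 𝒦_i) be the knowledge structure delineated by (Q_i, S_i, μ_i). If the family {S_i : i ∈ I} is pairwise disjoint, then: if every (Q_i, 𝒦_i) is discriminative, (Q, 𝒦) is discriminative; and if every (Q_i, 𝒦_i) is bi-discriminative, (Q, 𝒦) is bi-discriminative. -/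
/-! With disjoint skill domains, a competency of `q` from the `j`-th component can only fit
under a fuzzy set vanishing outside `S_i` when `j = i`; hence on such fuzzy sets the global
problem function coincides with the local one of the `i`-th component, and every local state is
a global state. Local separations of two items therefore lift, and an item of `Q_i` is
separated from an item outside `Q_i` by the global state induced by the indicator of `S_i`. -/

section KnowledgeStructure

variable {Q : Type*} {𝒦 𝒦' : Set (Set Q)} {q r : Q}

theorem not_Kq_subset_Kq_iff : ¬ Kq 𝒦 q ⊆ Kq 𝒦 r ↔ ∃ K ∈ 𝒦, q ∈ K ∧ r ∉ K := by
  simp only [Kq, Set.not_subset, Set.mem_sep_iff]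
  exact exists_congr fun K => ⟨fun ⟨⟨hK, hq⟩, hr⟩ => ⟨hK, hq, fun h => hr ⟨hK, h⟩⟩,
    fun ⟨hK, hq, hr⟩ => ⟨⟨hK, hq⟩, fun h => hr h.2⟩⟩

theorem not_Kq_subset_Kq_of_subset (h𝒦 : 𝒦 ⊆ 𝒦') (h : ¬ Kq 𝒦 q ⊆ Kq 𝒦 r) :
    ¬ Kq 𝒦' q ⊆ Kq 𝒦' r := by
  obtain ⟨K, hK, hqK, hrK⟩ := not_Kq_subset_Kq_iff.mp h
  exact not_Kq_subset_Kq_iff.mpr ⟨K, h𝒦 hK, hqK, hrK⟩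

theorem not_Kq_subset_or_of_ne (h : Kq 𝒦 q ≠ Kq 𝒦 r) :
    ¬ Kq 𝒦 q ⊆ Kq 𝒦 r ∨ ¬ Kq 𝒦 r ⊆ Kq 𝒦 q :=
  not_and_or.mp fun hsub => h (hsub.1.antisymm hsub.2)

end KnowledgeStructure

theorem FuzzySet.eq_zero_of_le_of_disjoint {S : Type*} {C F : FuzzySet S} {A B : Set S}
    (hAB : Disjoint A B) (hC : ∀ s ∉ A, C s = 0) (hF : ∀ s ∉ B, F s = 0) (hCF : C ≤ F) :
    C = 0 := by
  funext s
  by_cases hs : s ∈ A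
  · exact le_antisymm ((hCF s).trans_eq (hF s (Set.disjoint_left.mp hAB hs))) unitInterval.nonneg'
  · exact hC s hs

section Merge

variable {ι Q S : Type*} {Qi : ι → Set Q} {Si : ι → Set S} {μi : ι → Q → Set (FuzzySet S)}
  {μ : Q → Set (FuzzySet S)}

theorem pfun_eq_inter_pfun_of_vanish
    (hinz : ∀ i, ∀ q ∈ Qi i, ∀ C ∈ μi i q, C ≠ 0)
    (hvanish : ∀ i, ∀ q ∈ Qi i, ∀ C ∈ μi i q, ∀ s ∉ Si i, C s = 0)
    (hμ : ∀ q, μ q = {C | ∃ i, q ∈ Qi i ∧ C ∈ μi i q})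
    (hSdisj : ∀ i j, i ≠ j → Disjoint (Si i) (Si j))
    {i : ι} {F : FuzzySet S} (hF : ∀ s ∉ Si i, F s = 0) :
    pfun μ F = Qi i ∩ pfun (μi i) F := by
  ext q
  simp only [pfun, hμ, Set.mem_inter_iff]
  constructor
  · rintro ⟨C, ⟨j, hqj, hCj⟩, hCF⟩
    obtain rfl | hji := eq_or_ne j i
    · exact ⟨hqj, C, hCj, hCF⟩
    · exact absurd (FuzzySet.eq_zero_of_le_of_disjoint (hSdisj j i hji)
        (hvanish j q hqj C hCj) hF hCF) (hinz j q hqj C hCj)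
  · rintro ⟨hqi, C, hC, hCF⟩
    exact ⟨C, ⟨i, hqi, hC⟩, hCF⟩

theorem not_Kq_subset_Kq_of_mem_of_not_mem
    (hine : ∀ i, ∀ q ∈ Qi i, (μi i q).Nonempty)
    (hinz : ∀ i, ∀ q ∈ Qi i, ∀ C ∈ μi i q, C ≠ 0)
    (hvanish : ∀ i, ∀ q ∈ Qi i, ∀ C ∈ μi i q, ∀ s ∉ Si i, C s = 0)
    (hμ : ∀ q, μ q = {C | ∃ i, q ∈ Qi i ∧ C ∈ μi i q})
    (hSdisj : ∀ i j, i ≠ j → Disjoint (Si i) (Si j))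
    {i : ι} {q r : Q} (hq : q ∈ Qi i) (hr : r ∉ Qi i) :
    ¬ Kq (delineated μ) q ⊆ Kq (delineated μ) r := by
  set F : FuzzySet S := (Si i).indicator 1
  have hF : ∀ s ∉ Si i, F s = 0 := fun s hs => Set.indicator_of_notMem hs _
  have hpF := pfun_eq_inter_pfun_of_vanish hinz hvanish hμ hSdisj hF
  obtain ⟨C, hC⟩ := hine i q hq
  have hCF : C ≤ F := fun s => by
    by_cases hs : s ∈ Si i
    · simpa [F, Set.indicator_of_mem hs] using unitInterval.le_one'
    · exact hvanish i q hq C hC s hs ▸ unitInterval.nonneg'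
  refine not_Kq_subset_Kq_iff.mpr ⟨pfun μ F, ⟨F, rfl⟩, ?_, fun hrF => ?_⟩
  · exact hpF ▸ ⟨hq, C, hC, hCF⟩
  · exact hr (hpF ▸ hrF).1

theorem image_local_pfun_subset_delineated
    (hinz : ∀ i, ∀ q ∈ Qi i, ∀ C ∈ μi i q, C ≠ 0)
    (hvanish : ∀ i, ∀ q ∈ Qi i, ∀ C ∈ μi i q, ∀ s ∉ Si i, C s = 0)
    (hμ : ∀ q, μ q = {C | ∃ i, q ∈ Qi i ∧ C ∈ μi i q})
    (hSdisj : ∀ i j, i ≠ j → Disjoint (Si i) (Si j)) (i : ι) :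
    (fun F => {q ∈ Qi i | ∃ C ∈ μi i q, C ≤ F}) '' {F : FuzzySet S | ∀ s ∉ Si i, F s = 0} ⊆
      delineated μ := by
  rintro _ ⟨F, hF, rfl⟩
  exact ⟨F, pfun_eq_inter_pfun_of_vanish hinz hvanish hμ hSdisj hF⟩

end Merge

theorem stmt_18_general {ι Q S : Type*}
    (Qi : ι → Set Q) (Si : ι → Set S)
    (hQcover : ⋃ i, Qi i = Set.univ)
    (μi : ι → Q → Set (FuzzySet S))
    (hine : ∀ i, ∀ q ∈ Qi i, (μi i q).Nonempty)
    (hinz : ∀ i, ∀ q ∈ Qi i, ∀ C ∈ μi i q, C ≠ 0)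
    (hvanish : ∀ i, ∀ q ∈ Qi i, ∀ C ∈ μi i q, ∀ s ∉ Si i, C s = 0)
    (μ : Q → Set (FuzzySet S))
    (hμ : ∀ q, μ q = {C | ∃ i, q ∈ Qi i ∧ C ∈ μi i q})
    (Ki : ι → Set (Set Q))
    (hKi : ∀ i, Ki i = (fun F => {q ∈ Qi i | ∃ C ∈ μi i q, C ≤ F}) ''
      {F : FuzzySet S | ∀ s ∉ Si i, F s = 0})
    (hSdisj : ∀ i j, i ≠ j → Disjoint (Si i) (Si j)) :
    ((∀ i, ∀ q ∈ Qi i, ∀ r ∈ Qi i, q ≠ r → Kq (Ki i) q ≠ Kq (Ki i) r) →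
      Discriminative (delineated μ)) ∧
    ((∀ i, ∀ q ∈ Qi i, ∀ r ∈ Qi i, q ≠ r →
        ¬ Kq (Ki i) q ⊆ Kq (Ki i) r ∧ ¬ Kq (Ki i) r ⊆ Kq (Ki i) q) →
      BiDiscriminative (delineated μ)) := by
  have hcover (q : Q) : ∃ i, q ∈ Qi i := Set.iUnion_eq_univ_iff.mp hQcover q
  have hlift {i : ι} {q r : Q} (h : ¬ Kq (Ki i) q ⊆ Kq (Ki i) r) :
      ¬ Kq (delineated μ) q ⊆ Kq (delineated μ) r :=
    not_Kq_subset_Kq_of_subset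
      (hKi i ▸ image_local_pfun_subset_delineated hinz hvanish hμ hSdisj i) h
  have hsep {i : ι} {q r : Q} (hq : q ∈ Qi i) (hr : r ∉ Qi i) :
      ¬ Kq (delineated μ) q ⊆ Kq (delineated μ) r :=
    not_Kq_subset_Kq_of_mem_of_not_mem hine hinz hvanish hμ hSdisj hq hr
  constructor
  · intro hloc q r hne heq
    obtain ⟨i, hq⟩ := hcover q
    by_cases hr : r ∈ Qi i
    · rcases not_Kq_subset_or_of_ne (hloc i q hq r hr hne) with h | h
      · exact hlift h heq.le
      · exact hlift h heq.ge
    · exact hsep hq hr heq.le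
  · intro hloc
    have hdir (q r : Q) (hne : q ≠ r) : ¬ Kq (delineated μ) q ⊆ Kq (delineated μ) r := by
      obtain ⟨i, hq⟩ := hcover q
      by_cases hr : r ∈ Qi i
      · exact hlift (hloc i q hq r hr hne).1
      · exact hsep hq hr
    exact fun q r hne => ⟨hdir q r hne, hdir r q hne.symm⟩

/-- For a family of fuzzy skill functions `(Q_i, S_i, μ_i)` whose merge
`(Q, S, μ)` is a distributed fuzzy skill function, if the skill domains `S_i` are
pairwise disjoint, then discriminativity (resp. bi-discriminativity) of every local
delineated structure implies that of the global delineated structure. -/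
theorem stmt_18 {ι Q S : Type*} [Nonempty Q] [Nonempty S]
    (Qi : ι → Set Q) (Si : ι → Set S)
    (hQcover : ⋃ i, Qi i = Set.univ) (hScover : ⋃ i, Si i = Set.univ)
    (hQine : ∀ i, (Qi i).Nonempty) (hSine : ∀ i, (Si i).Nonempty)
    (μi : ι → Q → Set (FuzzySet S))
    (hine : ∀ i, ∀ q ∈ Qi i, (μi i q).Nonempty)
    (hinz : ∀ i, ∀ q ∈ Qi i, ∀ C ∈ μi i q, C ≠ 0)
    (hvanish : ∀ i, ∀ q ∈ Qi i, ∀ C ∈ μi i q, ∀ s ∉ Si i, C s = 0)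
    (hincomp : ∀ i, ∀ q ∈ Qi i, ∀ C ∈ μi i q, ∀ D ∈ μi i q, C ≤ D → C = D)
    (μ : Q → Set (FuzzySet S))
    (hμ : ∀ q, μ q = {C | ∃ i, q ∈ Qi i ∧ C ∈ μi i q})
    (hdistr : ∀ q, ∀ C ∈ μ q, ∀ D ∈ μ q, C ≤ D → C = D)
    (Ki : ι → Set (Set Q))
    (hKi : ∀ i, Ki i = (fun F => {q ∈ Qi i | ∃ C ∈ μi i q, C ≤ F}) ''
      {F : FuzzySet S | ∀ s ∉ Si i, F s = 0})
    (hSdisj : ∀ i j, i ≠ j → Disjoint (Si i) (Si j)) :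
    ((∀ i, ∀ q ∈ Qi i, ∀ r ∈ Qi i, q ≠ r → Kq (Ki i) q ≠ Kq (Ki i) r) →
      Discriminative (delineated μ)) ∧
    ((∀ i, ∀ q ∈ Qi i, ∀ r ∈ Qi i, q ≠ r →
        ¬ Kq (Ki i) q ⊆ Kq (Ki i) r ∧ ¬ Kq (Ki i) r ⊆ Kq (Ki i) q) →
      BiDiscriminative (delineated μ)) :=
  stmt_18_general Qi Si hQcover μi hine hinz hvanish μ hμ Ki hKi hSdisj
end
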